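/- arXiv:2310.19837 — 2 statements merged into one kernel-verified Lean document; each statement's English description precedes it below -/
import Mathlib

section
/- Perfect-privacy utility upper bound: if random variables X, Y, U (finite-valued, on a common probability space) satisfy I[U:X] = 0 (i.e., U carries no information about X), then I[U:Y] ≤ H[Y|X]. -/
open MeasureTheory ProbabilityTheory Real

noncomputable section

variable {Ω : Type*} [MeasurableSpace Ω]

/-- Shannon entropy (natural logarithm) of a finite-valued random variable `Z` under `μ`. -/
def ent {S : Type*} [Fintype S] (μ : Measure Ω) (Z : Ω → S) : ℝ :=
  ∑ z : S, Real.negMulLog (μ (Z ⁻¹' {z})).toReal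

/-- Conditional entropy `H[Z₁ | Z₂] = H[(Z₁,Z₂)] - H[Z₂]`. -/
def condEnt {S T : Type*} [Fintype S] [Fintype T] (μ : Measure Ω)
    (Z₁ : Ω → S) (Z₂ : Ω → T) : ℝ :=
  ent μ (fun ω => (Z₁ ω, Z₂ ω)) - ent μ Z₂

/-- Mutual information `I[Z₁ : Z₂] = H[Z₁] + H[Z₂] - H[(Z₁,Z₂)]`. -/
def mutInfo {S T : Type*} [Fintype S] [Fintype T] (μ : Measure Ω)
    (Z₁ : Ω → S) (Z₂ : Ω → T) : ℝ :=
  ent μ Z₁ + ent μ Z₂ - ent μ (fun ω => (Z₁ ω, Z₂ ω))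

/-- Conditional mutual information
`I[Z₁ : Z₂ | Z₃] = H[(Z₁,Z₃)] + H[(Z₂,Z₃)] - H[(Z₁,Z₂,Z₃)] - H[Z₃]`. -/
def condMutInfo {S T R : Type*} [Fintype S] [Fintype T] [Fintype R] (μ : Measure Ω)
    (Z₁ : Ω → S) (Z₂ : Ω → T) (Z₃ : Ω → R) : ℝ :=
  ent μ (fun ω => (Z₁ ω, Z₃ ω)) + ent μ (fun ω => (Z₂ ω, Z₃ ω))
    - ent μ (fun ω => (Z₁ ω, Z₂ ω, Z₃ ω)) - ent μ Z₃

/-!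
Since `I[U:X] = 0` means `H[U,X] = H[U] + H[X]`, the claim rearranges to
`H[U,X] + H[Y] ≤ H[U,Y] + H[X,Y]`. This follows from monotonicity `H[U,X] ≤ H[U,X,Y]` and
submodularity `H[U,X,Y] + H[Y] ≤ H[U,Y] + H[X,Y]`, i.e. `I[U:X|Y] ≥ 0`. Submodularity holds
fibrewise over `Y`: on each fibre it is Gibbs' inequality comparing the joint law of `(U,X)`
with the product of its marginals.
-/

namespace Real

lemma negMulLog_add_mul_log_le {p q : ℝ} (hp : 0 ≤ p) (hq : 0 ≤ q) (hpq : q = 0 → p = 0) :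
    negMulLog p + p * log q ≤ q - p := by
  rcases hp.eq_or_lt with rfl | hp
  · simpa using hq
  have hq : 0 < q := hq.lt_of_ne fun h => hp.ne' (hpq h.symm)
  have h := mul_le_mul_of_nonneg_left (log_le_sub_one_of_pos (div_pos hq hp)) hp.le
  rw [log_div hq.ne' hp.ne', mul_sub, mul_sub, mul_div_cancel₀ _ hp.ne', mul_one] at h
  rw [negMulLog]
  linarith

/-- Gibbs' inequality, for unnormalised weights. -/
lemma sum_negMulLog_le_neg_sum_mul_log {ι : Type*} [Fintype ι] {p q : ι → ℝ}
    (hp : ∀ i, 0 ≤ p i) (hq : ∀ i, 0 ≤ q i) (hpq : ∀ i, q i = 0 → p i = 0)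
    (hsum : ∑ i, q i ≤ ∑ i, p i) :
    ∑ i, negMulLog (p i) ≤ -∑ i, p i * log (q i) := by
  have h := Finset.sum_le_sum fun i (_ : i ∈ Finset.univ) =>
    negMulLog_add_mul_log_le (hp i) (hq i) (hpq i)
  rw [Finset.sum_add_distrib, Finset.sum_sub_distrib] at h
  linarith

lemma negMulLog_sum_le_sum_negMulLog {ι : Type*} (s : Finset ι) {f : ι → ℝ}
    (hf : ∀ i ∈ s, 0 ≤ f i) :
    negMulLog (∑ i ∈ s, f i) ≤ ∑ i ∈ s, negMulLog (f i) := by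
  rw [negMulLog_eq_neg]
  simp only [Finset.sum_mul, ← Finset.sum_neg_distrib]
  refine Finset.sum_le_sum fun i hi => neg_le_neg ?_
  rcases (hf i hi).eq_or_lt with h | h
  · simp [← h]
  · exact mul_le_mul_of_nonneg_left
      (log_le_log h (Finset.single_le_sum hf hi)) h.le

lemma sum_negMulLog_subadditive {α β : Type*} [Fintype α] [Fintype β] {r : α → β → ℝ}
    (hr : ∀ a b, 0 ≤ r a b) :
    ∑ a, ∑ b, negMulLog (r a b) + negMulLog (∑ a, ∑ b, r a b)
      ≤ ∑ a, negMulLog (∑ b, r a b) + ∑ b, negMulLog (∑ a, r a b) := by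
  set rα : α → ℝ := fun a => ∑ b, r a b
  set rβ : β → ℝ := fun b => ∑ a, r a b
  set t := ∑ a, rα a
  have hrα : ∀ a b, r a b ≤ rα a := fun a b =>
    Finset.single_le_sum (fun b _ => hr a b) (Finset.mem_univ b)
  have hrβ : ∀ a b, r a b ≤ rβ b := fun a b =>
    Finset.single_le_sum (fun a _ => hr a b) (Finset.mem_univ a)
  have hrα₀ : ∀ a, 0 ≤ rα a := fun a => Finset.sum_nonneg fun b _ => hr a b
  have hrβ₀ : ∀ b, 0 ≤ rβ b := fun b => Finset.sum_nonneg fun a _ => hr a b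
  have ht : ∀ a, rα a ≤ t := fun a => Finset.single_le_sum (fun a _ => hrα₀ a) (Finset.mem_univ a)
  have htβ : ∑ b, rβ b = t := Finset.sum_comm
  -- Gibbs' inequality against the product of the marginals, normalised to total mass `t`
  have hgibbs := sum_negMulLog_le_neg_sum_mul_log (p := fun i : α × β => r i.1 i.2)
    (q := fun i => rα i.1 * rβ i.2 / t) (fun i => hr i.1 i.2)
    (fun i => div_nonneg (mul_nonneg (hrα₀ i.1) (hrβ₀ i.2)) ((hrα₀ i.1).trans (ht i.1)))
    ?hpq ?hsum
  case hpq =>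
    rintro ⟨a, b⟩ h
    simp only [div_eq_zero_iff, mul_eq_zero] at h
    refine le_antisymm ?_ (hr a b)
    rcases h with (h | h) | h
    · exact h ▸ hrα a b
    · exact h ▸ hrβ a b
    · exact h ▸ (hrα a b).trans (ht a)
  case hsum =>
    rw [Fintype.sum_prod_type, Fintype.sum_prod_type]
    simp only [← Finset.sum_div, ← Finset.sum_mul_sum, htβ]
    exact (mul_self_div_self t).le
  have hlog : ∀ a b, r a b * log (rα a * rβ b / t)
      = r a b * log (rα a) + r a b * log (rβ b) - r a b * log t := by
    intro a b
    rcases (hr a b).eq_or_lt with h | h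
    · simp [← h]
    have hα := h.trans_le (hrα a b)
    have hβ := h.trans_le (hrβ a b)
    rw [log_div (by positivity) (hα.trans_le (ht a)).ne', log_mul hα.ne' hβ.ne']
    ring
  simp only [Fintype.sum_prod_type, hlog, Finset.sum_add_distrib, Finset.sum_sub_distrib,
    ← Finset.sum_mul] at hgibbs
  rw [Finset.sum_comm (f := fun a b => r a b * log (rβ b))] at hgibbs
  simp only [← Finset.sum_mul] at hgibbs
  simp only [negMulLog_eq_neg, Finset.sum_neg_distrib] at hgibbs ⊢
  linarith

lemma sum_negMulLog_submodular {α β γ : Type*} [Fintype α] [Fintype β] [Fintype γ]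
    {r : α → β → γ → ℝ} (hr : ∀ a b c, 0 ≤ r a b c) :
    ∑ a, ∑ b, ∑ c, negMulLog (r a b c) + ∑ c, negMulLog (∑ a, ∑ b, r a b c)
      ≤ ∑ a, ∑ c, negMulLog (∑ b, r a b c) + ∑ b, ∑ c, negMulLog (∑ a, r a b c) := by
  have h := Finset.sum_le_sum fun c (_ : c ∈ Finset.univ) =>
    sum_negMulLog_subadditive (r := fun a b => r a b c) fun a b => hr a b c
  simp only [Finset.sum_add_distrib] at h
  have hcomm : ∑ c, ∑ a, ∑ b, negMulLog (r a b c) = ∑ a, ∑ b, ∑ c, negMulLog (r a b c) := by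
    rw [Finset.sum_comm]
    exact Finset.sum_congr rfl fun a _ => Finset.sum_comm
  rwa [hcomm, Finset.sum_comm (s := (Finset.univ : Finset γ)) (t := (Finset.univ : Finset α)),
    Finset.sum_comm (s := (Finset.univ : Finset γ)) (t := (Finset.univ : Finset β))] at h

end Real

section Entropy

variable {μ : Measure Ω} {S T R : Type*} [Fintype S] [Fintype T] [Fintype R]

lemma measureReal_eq_sum_measureReal_inter_preimage [IsFiniteMeasure μ]
    [MeasurableSpace T] [MeasurableSingletonClass T] {B : Ω → T} (hB : Measurable B)
    (s : Set Ω) : μ.real s = ∑ b, μ.real (s ∩ B ⁻¹' {b}) := by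
  have h := sum_measureReal_preimage_singleton (μ := μ.restrict s) Finset.univ
    fun b _ => hB (measurableSet_singleton b)
  simp only [Measure.real, Measure.restrict_apply (hB (measurableSet_singleton _)),
    Finset.coe_univ, Set.preimage_univ, Measure.restrict_apply_univ] at h
  simp only [Measure.real, ← h, Set.inter_comm]

lemma ent_comp_equiv (μ : Measure Ω) (Z : Ω → S) (e : S ≃ T) :
    ent μ (fun ω => e (Z ω)) = ent μ Z := by
  rw [ent, ← e.sum_comp]
  refine Finset.sum_congr rfl fun s _ => ?_
  congr 3
  ext ω
  simp

lemma ent_le_ent_prod [IsFiniteMeasure μ] [MeasurableSpace T] [MeasurableSingletonClass T]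
    (A : Ω → S) {B : Ω → T} (hB : Measurable B) :
    ent μ A ≤ ent μ (fun ω => (A ω, B ω)) := by
  rw [ent, ent, Fintype.sum_prod_type]
  refine Finset.sum_le_sum fun a _ => ?_
  simp only [← measureReal_def, ← Set.singleton_prod_singleton, Set.mk_preimage_prod]
  rw [measureReal_eq_sum_measureReal_inter_preimage hB]
  exact negMulLog_sum_le_sum_negMulLog _ fun b _ => measureReal_nonneg

lemma condMutInfo_nonneg [IsFiniteMeasure μ] [MeasurableSpace S] [MeasurableSingletonClass S]
    [MeasurableSpace T] [MeasurableSingletonClass T] {Z₁ : Ω → S} {Z₂ : Ω → T}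
    (h₁ : Measurable Z₁) (h₂ : Measurable Z₂) (Z₃ : Ω → R) :
    0 ≤ condMutInfo μ Z₁ Z₂ Z₃ := by
  set p : S → T → R → ℝ := fun a b c => μ.real (Z₁ ⁻¹' {a} ∩ (Z₂ ⁻¹' {b} ∩ Z₃ ⁻¹' {c}))
  have h₁₃ : ∀ a c, ∑ b, p a b c = μ.real (Z₁ ⁻¹' {a} ∩ Z₃ ⁻¹' {c}) := fun a c => by
    simp only [p, measureReal_eq_sum_measureReal_inter_preimage h₂ (Z₁ ⁻¹' {a} ∩ Z₃ ⁻¹' {c}),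
      Set.inter_right_comm _ (Z₃ ⁻¹' _), Set.inter_assoc]
  have h₂₃ : ∀ b c, ∑ a, p a b c = μ.real (Z₂ ⁻¹' {b} ∩ Z₃ ⁻¹' {c}) := fun b c => by
    simp only [p, measureReal_eq_sum_measureReal_inter_preimage h₁ (Z₂ ⁻¹' {b} ∩ Z₃ ⁻¹' {c}),
      Set.inter_comm (Z₁ ⁻¹' _)]
  have h₃ : ∀ c, ∑ a, ∑ b, p a b c = μ.real (Z₃ ⁻¹' {c}) := fun c => by
    rw [Finset.sum_comm]
    simp only [h₂₃, measureReal_eq_sum_measureReal_inter_preimage h₂ (Z₃ ⁻¹' {c}),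
      Set.inter_comm (Z₂ ⁻¹' _)]
  have h := sum_negMulLog_submodular (r := p) fun _ _ _ => measureReal_nonneg
  simp only [h₃] at h
  simp only [h₁₃, h₂₃, p] at h
  simp only [condMutInfo, ent, ← measureReal_def, Fintype.sum_prod_type,
    ← Set.singleton_prod_singleton, Set.mk_preimage_prod]
  linarith

end Entropy

theorem perfect_privacy_utility_upper_bound_general {𝒳 𝒴 𝒰 : Type*} [Fintype 𝒳] [MeasurableSpace 𝒳] [MeasurableSingletonClass 𝒳]
    [Fintype 𝒴] [MeasurableSpace 𝒴] [MeasurableSingletonClass 𝒴]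
    [Fintype 𝒰] [MeasurableSpace 𝒰] [MeasurableSingletonClass 𝒰]
    (μ : Measure Ω) [IsProbabilityMeasure μ]
    (X : Ω → 𝒳) (Y : Ω → 𝒴) (U : Ω → 𝒰)
    (hX : Measurable X) (hY : Measurable Y) (hU : Measurable U)
    (hUX : mutInfo μ U X = 0) :
    mutInfo μ U Y ≤ condEnt μ Y X := by
  have hsub := condMutInfo_nonneg (μ := μ) hU hX Y
  have hmono := ent_le_ent_prod (μ := μ) (fun ω => (U ω, X ω)) hY
  have hassoc := ent_comp_equiv μ (fun ω => ((U ω, X ω), Y ω)) (Equiv.prodAssoc 𝒰 𝒳 𝒴)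
  have hswap := ent_comp_equiv μ (fun ω => (X ω, Y ω)) (Equiv.prodComm 𝒳 𝒴)
  simp only [Equiv.prodAssoc_apply, Equiv.prodComm_apply, Prod.swap_prod_mk] at hassoc hswap
  simp only [mutInfo, condEnt, condMutInfo] at hUX hsub ⊢
  linarith

/-- Perfect-privacy utility upper bound. -/
theorem perfect_privacy_utility_upper_bound {𝒳 𝒴 𝒰 : Type*} [Fintype 𝒳] [Nonempty 𝒳] [MeasurableSpace 𝒳] [MeasurableSingletonClass 𝒳]
    [Fintype 𝒴] [Nonempty 𝒴] [MeasurableSpace 𝒴] [MeasurableSingletonClass 𝒴]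
    [Fintype 𝒰] [Nonempty 𝒰] [MeasurableSpace 𝒰] [MeasurableSingletonClass 𝒰]
    (μ : Measure Ω) [IsProbabilityMeasure μ]
    (X : Ω → 𝒳) (Y : Ω → 𝒴) (U : Ω → 𝒰)
    (hX : Measurable X) (hY : Measurable Y) (hU : Measurable U)
    (hUX : mutInfo μ U X = 0) :
    mutInfo μ U Y ≤ condEnt μ Y X :=
  perfect_privacy_utility_upper_bound_general μ X Y U hX hY hU hUX
end
end

section
/- Lower bound via the linear program (Theorem 1, bound (11) / Theorem 3, bound (29)): suppose random variables X : Ω → 𝒳, Y : Ω → 𝒴, U : Ω → 𝒰 (finite-valued, on a common probability space) satisfy I[X:U] = 0, I[X:U|Y] = 0, and H[Y|(X,U)] = 0. Let S ⊆ ℝ be the set of values Σ_{y ∈ 𝒴} μ(Y = y)·a(y) over all a : 𝒴 → ℝ with a(y) ≥ 0 for all y and Σ_{y ∈ 𝒴} (μ(Y = y) − μ(Y = y | X = x))·a(y) = H[Y | X ← x] − H[Y|X] for every x with μ(X = x) > 0. Then S is nonempty, bounded below (by 0), and H[U] ≥ H[Y|X] + sInf S. -/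
open MeasureTheory ProbabilityTheory Real

set_option linter.unusedSectionVars false

noncomputable section

variable {Ω : Type*} [MeasurableSpace Ω]

section Helpers

variable {S T : Type*} [Fintype S] [Fintype T]

lemma ent_comp_inj (μ : Measure Ω) (Z : Ω → S) {f : S → T} (hf : Function.Injective f) :
    ent μ (fun ω => f (Z ω)) = ent μ Z := by
  classical
  unfold ent
  rw [← Finset.sum_subset (Finset.subset_univ (Finset.univ.image f))]
  · rw [Finset.sum_image (fun a _ b _ h => hf h)]
    refine Finset.sum_congr rfl fun z _ => ?_
    have h0 : (fun ω => f (Z ω)) ⁻¹' {f z} = Z ⁻¹' {z} := by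
      ext ω; simp [hf.eq_iff]
    rw [h0]
  · intro t _ ht
    have h0 : (fun ω => f (Z ω)) ⁻¹' {t} = ∅ := by
      ext ω
      simp only [Set.mem_preimage, Set.mem_singleton_iff, Set.mem_empty_iff_false, iff_false]
      intro h
      exact ht (Finset.mem_image.2 ⟨Z ω, Finset.mem_univ _, h⟩)
    simp [h0]

variable [MeasurableSpace S] [MeasurableSingletonClass S]
  [MeasurableSpace T] [MeasurableSingletonClass T]

lemma cond_le_one (μ : Measure Ω) [IsFiniteMeasure μ] {s : Set Ω} (hs : MeasurableSet s)
    (t : Set Ω) : (μ[|s]) t ≤ 1 := by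
  rw [cond_apply hs]
  rcases eq_or_ne (μ s) 0 with h | h
  · have h2 : μ (s ∩ t) = 0 := measure_inter_null_of_null_left t h
    simp [h2]
  · have h1 : (μ s)⁻¹ * μ (s ∩ t) ≤ (μ s)⁻¹ * μ s :=
      mul_le_mul_right (measure_mono Set.inter_subset_left) _
    have h2 : (μ s)⁻¹ * μ s = 1 := ENNReal.inv_mul_cancel h (measure_ne_top μ s)
    exact h1.trans h2.le

lemma ent_cond_nonneg (μ : Measure Ω) [IsFiniteMeasure μ] {s : Set Ω} (hs : MeasurableSet s)
    (Z : Ω → S) : 0 ≤ ent (μ[|s]) Z := by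
  refine Finset.sum_nonneg fun z _ => negMulLog_nonneg ENNReal.toReal_nonneg ?_
  have := ENNReal.toReal_mono ENNReal.one_ne_top (cond_le_one μ hs (Z ⁻¹' {z}))
  simpa using this

lemma sum_prob_eq_one (μ : Measure Ω) [IsProbabilityMeasure μ] {Z : Ω → S} (hZ : Measurable Z) :
    ∑ z : S, ((μ (Z ⁻¹' {z})).toReal) = 1 := by
  have h := sum_measure_preimage_singleton (μ := μ) Finset.univ (f := Z)
    (fun y _ => hZ (measurableSet_singleton y))
  rw [Finset.coe_univ, Set.preimage_univ, measure_univ] at h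
  rw [← ENNReal.toReal_sum (fun a _ => measure_ne_top μ _), h, ENNReal.toReal_one]

lemma cond_toReal_mul (μ : Measure Ω) [IsFiniteMeasure μ] {s : Set Ω} (hs : MeasurableSet s)
    (t : Set Ω) : (μ (s ∩ t)).toReal = (μ s).toReal * ((μ[|s]) t).toReal := by
  rcases eq_or_ne (μ s) 0 with h | h
  · have h2 : μ (s ∩ t) = 0 := measure_inter_null_of_null_left t h
    simp [h2, h]
  · rw [cond_apply hs, ENNReal.toReal_mul, ENNReal.toReal_inv]
    have h3 : (μ s).toReal ≠ 0 := ENNReal.toReal_ne_zero.2 ⟨h, measure_ne_top μ s⟩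
    field_simp

lemma ent_pair_decomp (μ : Measure Ω) [IsProbabilityMeasure μ] {W : Ω → S} {Z : Ω → T}
    (hW : Measurable W) (hZ : Measurable Z) :
    ent μ (fun ω => (W ω, Z ω)) =
      ent μ Z + ∑ z : T, (μ (Z ⁻¹' {z})).toReal * ent (μ[|Z ⁻¹' {z}]) W := by
  have key : ∀ z : T, ∑ w : S, negMulLog (μ ((fun ω => (W ω, Z ω)) ⁻¹' {(w, z)})).toReal
      = negMulLog (μ (Z ⁻¹' {z})).toReal + (μ (Z ⁻¹' {z})).toReal * ent (μ[|Z ⁻¹' {z}]) W := by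
    intro z
    have hpre : ∀ w : S, (fun ω => (W ω, Z ω)) ⁻¹' {(w, z)} = Z ⁻¹' {z} ∩ W ⁻¹' {w} := by
      intro w; ext ω
      simp [Prod.ext_iff, and_comm]
    rcases eq_or_ne (μ (Z ⁻¹' {z})) 0 with h | h
    · have h1 : ∀ w : S, μ ((fun ω => (W ω, Z ω)) ⁻¹' {(w, z)}) = 0 := fun w => by
        rw [hpre w]; exact measure_inter_null_of_null_left _ h
      have h2 : ent (μ[|Z ⁻¹' {z}]) W = 0 := by
        unfold ent
        refine Finset.sum_eq_zero fun w _ => ?_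
        rw [cond_apply (hZ (measurableSet_singleton z)),
          measure_inter_null_of_null_left _ h]
        simp
      simp [h1, h, h2]
    · have hprob : IsProbabilityMeasure (μ[|Z ⁻¹' {z}]) := cond_isProbabilityMeasure h
      have hsum : ∑ w : S, (((μ[|Z ⁻¹' {z}]) (W ⁻¹' {w})).toReal) = 1 :=
        sum_prob_eq_one _ hW
      calc ∑ w : S, negMulLog (μ ((fun ω => (W ω, Z ω)) ⁻¹' {(w, z)})).toReal
          = ∑ w : S, negMulLog ((μ (Z ⁻¹' {z})).toReal * ((μ[|Z ⁻¹' {z}]) (W ⁻¹' {w})).toReal) := by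
            refine Finset.sum_congr rfl fun w _ => ?_
            rw [hpre w, cond_toReal_mul μ (hZ (measurableSet_singleton z))]
        _ = ∑ w : S, (((μ[|Z ⁻¹' {z}]) (W ⁻¹' {w})).toReal * negMulLog (μ (Z ⁻¹' {z})).toReal
              + (μ (Z ⁻¹' {z})).toReal * negMulLog ((μ[|Z ⁻¹' {z}]) (W ⁻¹' {w})).toReal) := by
            refine Finset.sum_congr rfl fun w _ => ?_
            exact negMulLog_mul _ _
        _ = negMulLog (μ (Z ⁻¹' {z})).toReal + (μ (Z ⁻¹' {z})).toReal * ent (μ[|Z ⁻¹' {z}]) W := by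
            rw [Finset.sum_add_distrib, ← Finset.sum_mul, hsum, ← Finset.mul_sum]
            simp [ent]
  unfold ent
  rw [Fintype.sum_prod_type, Finset.sum_comm]
  rw [← Finset.sum_add_distrib]
  refine Finset.sum_congr rfl fun z _ => ?_
  exact key z

end Helpers

section Helpers2

variable {S T : Type*} [Fintype S] [Fintype T]
  [MeasurableSpace S] [MeasurableSingletonClass S]
  [MeasurableSpace T] [MeasurableSingletonClass T]

lemma condEnt_eq_sum (μ : Measure Ω) [IsProbabilityMeasure μ] {W : Ω → S} {Z : Ω → T}
    (hW : Measurable W) (hZ : Measurable Z) :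
    condEnt μ W Z = ∑ z : T, (μ (Z ⁻¹' {z})).toReal * ent (μ[|Z ⁻¹' {z}]) W := by
  unfold condEnt
  rw [ent_pair_decomp μ hW hZ]
  ring

lemma ent_eq_sum (μ : Measure Ω) (Z : Ω → S) : ent μ Z = ∑ z : S, negMulLog (μ (Z ⁻¹' {z})).toReal := rfl

lemma ent_pair_eq_sum (μ : Measure Ω) (A : Ω → S) (B : Ω → T) :
    ent μ (fun ω => (A ω, B ω)) = ∑ i : S, ∑ k : T, negMulLog (μ (A ⁻¹' {i} ∩ B ⁻¹' {k})).toReal := by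
  rw [ent_eq_sum, Fintype.sum_prod_type]
  refine Finset.sum_congr rfl fun i _ => Finset.sum_congr rfl fun k _ => ?_
  have hpre : (fun ω => (A ω, B ω)) ⁻¹' {(i, k)} = A ⁻¹' {i} ∩ B ⁻¹' {k} := by
    ext ω; simp [Prod.ext_iff]
  rw [hpre]

lemma mutInfo_key (μ : Measure Ω) [IsProbabilityMeasure μ] {A : Ω → S} {B : Ω → T}
    (hA : Measurable A) (hB : Measurable B) :
    0 ≤ mutInfo μ A B ∧ (mutInfo μ A B = 0 → ∀ (i : S) (k : T),
      (μ (A ⁻¹' {i} ∩ B ⁻¹' {k})).toReal = (μ (A ⁻¹' {i})).toReal * (μ (B ⁻¹' {k})).toReal) := by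
  classical
  set F : S → T → ℝ := fun i k => (μ (A ⁻¹' {i} ∩ B ⁻¹' {k})).toReal with hFdef
  set pa : S → ℝ := fun i => (μ (A ⁻¹' {i})).toReal with hpadef
  set pb : T → ℝ := fun k => (μ (B ⁻¹' {k})).toReal with hpbdef
  set q : S → T → ℝ := fun i k => if pb k = 0 then 0 else F i k / pb k with hqdef
  have hF0 : ∀ i k, 0 ≤ F i k := fun i k => ENNReal.toReal_nonneg
  have hpb0 : ∀ k, 0 ≤ pb k := fun k => ENNReal.toReal_nonneg
  have hFle : ∀ i k, F i k ≤ pb k := fun i k =>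
    ENNReal.toReal_mono (measure_ne_top μ _) (measure_mono Set.inter_subset_right)
  have hq0 : ∀ i k, 0 ≤ q i k := by
    intro i k
    by_cases h : pb k = 0
    · simp [hqdef, h]
    · simp only [hqdef, if_neg h]
      exact div_nonneg (hF0 i k) (hpb0 k)
  have hwq : ∀ i k, pb k * q i k = F i k := by
    intro i k
    by_cases h : pb k = 0
    · have hF : F i k = 0 := le_antisymm (h ▸ hFle i k) (hF0 i k)
      simp [hqdef, h, hF]
    · simp only [hqdef, if_neg h]
      field_simp
  have hsumFk : ∀ i, ∑ k, F i k = pa i := by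
    intro i
    have h2 : ∀ k : T, μ (A ⁻¹' {i} ∩ B ⁻¹' {k}) = (μ.restrict (A ⁻¹' {i})) (B ⁻¹' {k}) := by
      intro k
      rw [Measure.restrict_apply (hB (measurableSet_singleton k)), Set.inter_comm]
    have h := sum_measure_preimage_singleton (μ := μ.restrict (A ⁻¹' {i})) Finset.univ (f := B)
      (fun y _ => hB (measurableSet_singleton y))
    rw [Finset.coe_univ, Set.preimage_univ, Measure.restrict_apply_univ] at h
    calc ∑ k, F i k = (∑ k, μ (A ⁻¹' {i} ∩ B ⁻¹' {k})).toReal := by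
          rw [ENNReal.toReal_sum (fun a _ => measure_ne_top μ _)]
      _ = pa i := by
          simp_rw [h2]
          rw [h]
  have hsumFi : ∀ k, ∑ i, F i k = pb k := by
    intro k
    have h2 : ∀ i : S, μ (A ⁻¹' {i} ∩ B ⁻¹' {k}) = (μ.restrict (B ⁻¹' {k})) (A ⁻¹' {i}) := by
      intro i
      rw [Measure.restrict_apply (hA (measurableSet_singleton i))]
    have h := sum_measure_preimage_singleton (μ := μ.restrict (B ⁻¹' {k})) Finset.univ (f := A)
      (fun y _ => hA (measurableSet_singleton y))
    rw [Finset.coe_univ, Set.preimage_univ, Measure.restrict_apply_univ] at h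
    calc ∑ i, F i k = (∑ i, μ (A ⁻¹' {i} ∩ B ⁻¹' {k})).toReal := by
          rw [ENNReal.toReal_sum (fun a _ => measure_ne_top μ _)]
      _ = pb k := by
          simp_rw [h2]
          rw [h]
  have hsumpb : ∑ k, pb k = 1 := sum_prob_eq_one μ hB
  have hcenter : ∀ i, ∑ k, pb k * q i k = pa i := by
    intro i
    rw [Finset.sum_congr rfl fun k _ => hwq i k]
    exact hsumFk i
  have hsumq : ∀ k, pb k ≠ 0 → ∑ i, q i k = 1 := by
    intro k h
    simp only [hqdef, if_neg h]
    rw [← Finset.sum_div, hsumFi]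
    field_simp
  have hterm : ∀ i k, pb k * negMulLog (q i k) = negMulLog (F i k) - q i k * negMulLog (pb k) := by
    intro i k
    have h := negMulLog_mul (pb k) (q i k)
    rw [hwq i k] at h
    linarith
  have hD : ∀ i, ∑ k, pb k * negMulLog (q i k) ≤ negMulLog (pa i) := by
    intro i
    have h := Real.concaveOn_negMulLog.le_map_sum (t := Finset.univ) (w := pb) (p := q i)
      (fun k _ => hpb0 k) hsumpb (fun k _ => Set.mem_Ici.2 (hq0 i k))
    simpa only [smul_eq_mul, hcenter i] using h
  have hlast : ∑ k, (∑ i, q i k) * negMulLog (pb k) = ∑ k, negMulLog (pb k) := by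
    refine Finset.sum_congr rfl fun k _ => ?_
    by_cases h : pb k = 0
    · simp [h]
    · rw [hsumq k h, one_mul]
  have hsum : ∑ i, (negMulLog (pa i) - ∑ k, pb k * negMulLog (q i k)) = mutInfo μ A B := by
    have e1 : ∀ i, ∑ k, pb k * negMulLog (q i k)
        = ∑ k, negMulLog (F i k) - ∑ k, q i k * negMulLog (pb k) := by
      intro i
      rw [← Finset.sum_sub_distrib]
      exact Finset.sum_congr rfl fun k _ => hterm i k
    have e2 : ∑ i, ∑ k, q i k * negMulLog (pb k) = ∑ k, negMulLog (pb k) := by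
      rw [Finset.sum_comm]
      rw [← hlast]
      refine Finset.sum_congr rfl fun k _ => ?_
      rw [Finset.sum_mul]
    have e3 : ent μ A = ∑ i, negMulLog (pa i) := rfl
    have e4 : ent μ B = ∑ k, negMulLog (pb k) := rfl
    have e5 : ent μ (fun ω => (A ω, B ω)) = ∑ i, ∑ k, negMulLog (F i k) :=
      ent_pair_eq_sum μ A B
    unfold mutInfo
    rw [e3, e4, e5]
    rw [Finset.sum_sub_distrib]
    simp_rw [e1]
    rw [Finset.sum_sub_distrib, e2]
    ring
  constructor
  · rw [← hsum]
    exact Finset.sum_nonneg fun i _ => sub_nonneg.2 (hD i)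
  · intro h0 i k
    have hz := (Finset.sum_eq_zero_iff_of_nonneg
      (fun i _ => sub_nonneg.2 (hD i))).1 (hsum.trans h0) i (Finset.mem_univ i)
    have heq : negMulLog (∑ j, pb j • q i j) = ∑ j, pb j • negMulLog (q i j) := by
      simp only [smul_eq_mul, hcenter i]
      linarith [hz]
    have hiff := (Real.strictConcaveOn_negMulLog.map_sum_eq_iff' (t := Finset.univ)
      (w := pb) (p := q i) (fun k _ => hpb0 k) hsumpb
      (fun k _ => Set.mem_Ici.2 (hq0 i k))).1 heq
    by_cases h : pb k = 0
    · have hF : F i k = 0 := le_antisymm (h ▸ hFle i k) (hF0 i k)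
      show F i k = pa i * pb k
      rw [hF, h, mul_zero]
    · have hqk := hiff k (Finset.mem_univ k) h
      simp only [smul_eq_mul, hcenter i] at hqk
      show F i k = pa i * pb k
      rw [← hwq i k, hqk]
      ring

lemma ent_cond_eq_of_factor (μ : Measure Ω) [IsProbabilityMeasure μ] {A : Ω → S} {B : Ω → T}
    (hA : Measurable A)
    (hfac : ∀ (i : S) (k : T),
      (μ (A ⁻¹' {i} ∩ B ⁻¹' {k})).toReal = (μ (A ⁻¹' {i})).toReal * (μ (B ⁻¹' {k})).toReal)
    {i : S} (hi : μ (A ⁻¹' {i}) ≠ 0) :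
    ent (μ[|A ⁻¹' {i}]) B = ent μ B := by
  rw [ent_eq_sum, ent_eq_sum]
  refine Finset.sum_congr rfl fun k _ => ?_
  congr 1
  rw [cond_apply (hA (measurableSet_singleton i)), ENNReal.toReal_mul, ENNReal.toReal_inv, hfac i k]
  have h3 : (μ (A ⁻¹' {i})).toReal ≠ 0 := ENNReal.toReal_ne_zero.2 ⟨hi, measure_ne_top μ _⟩
  field_simp

end Helpers2

section Helpers3

variable {S T : Type*} [Fintype S] [Fintype T]

lemma ent_sub_identity (μ : Measure Ω) (A : Ω → S) (B : Ω → T) :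
    condEnt μ A B - condEnt μ B A = ent μ A - ent μ B := by
  simp only [condEnt]
  have e : ent μ (fun ω => (B ω, A ω)) = ent μ (fun ω => (A ω, B ω)) :=
    ent_comp_inj μ (fun ω => (A ω, B ω)) (f := Prod.swap) Prod.swap_injective
  linarith [e]

end Helpers3


/-- Lower bound via the linear program (Theorem 1, bound (11) / Theorem 3, bound (29)). -/
theorem entropy_lower_bound_linear_program {𝒳 𝒴 𝒰 : Type*} [Fintype 𝒳] [Nonempty 𝒳] [MeasurableSpace 𝒳] [MeasurableSingletonClass 𝒳]
    [Fintype 𝒴] [Nonempty 𝒴] [MeasurableSpace 𝒴] [MeasurableSingletonClass 𝒴]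
    [Fintype 𝒰] [Nonempty 𝒰] [MeasurableSpace 𝒰] [MeasurableSingletonClass 𝒰]
    (μ : Measure Ω) [IsProbabilityMeasure μ]
    (X : Ω → 𝒳) (Y : Ω → 𝒴) (U : Ω → 𝒰)
    (hX : Measurable X) (hY : Measurable Y) (hU : Measurable U)
    (h1 : mutInfo μ X U = 0)
    (h2 : condMutInfo μ X U Y = 0)
    (h3 : condEnt μ Y (fun ω => (X ω, U ω)) = 0)
    (S : Set ℝ)
    (hS : S = {s : ℝ | ∃ a : 𝒴 → ℝ, (∀ y : 𝒴, 0 ≤ a y) ∧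
      (∀ x : 𝒳, 0 < μ (X ⁻¹' {x}) →
        ∑ y : 𝒴, ((μ (Y ⁻¹' {y})).toReal - ((μ[|X ⁻¹' {x}]) (Y ⁻¹' {y})).toReal) * a y
          = ent (μ[|X ⁻¹' {x}]) Y - condEnt μ Y X) ∧
      s = ∑ y : 𝒴, (μ (Y ⁻¹' {y})).toReal * a y}) :
    S.Nonempty ∧ (∀ s ∈ S, 0 ≤ s) ∧ ent μ U ≥ condEnt μ Y X + sInf S := by
  classical
  have hXU : Measurable fun ω => (X ω, U ω) := hX.prodMk hU
  have hpreXU : ∀ (x : 𝒳) (u : 𝒰),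
      (fun ω => (X ω, U ω)) ⁻¹' {(x, u)} = X ⁻¹' {x} ∩ U ⁻¹' {u} := by
    intro x u; ext ω; simp [Prod.ext_iff]
  -- reorderings of entropies
  have eYXU : ent μ (fun ω => (Y ω, (X ω, U ω))) = ent μ (fun ω => (X ω, Y ω, U ω)) :=
    ent_comp_inj μ (fun ω => (X ω, Y ω, U ω)) (f := fun p => (p.2.1, (p.1, p.2.2))) (by
      intro p q h
      obtain ⟨p1, p2, p3⟩ := p
      obtain ⟨q1, q2, q3⟩ := q
      simp_all [Prod.ext_iff])
  have eXUY : ent μ (fun ω => (X ω, U ω, Y ω)) = ent μ (fun ω => (X ω, Y ω, U ω)) :=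
    ent_comp_inj μ (fun ω => (X ω, Y ω, U ω)) (f := fun p => (p.1, (p.2.2, p.2.1))) (by
      intro p q h
      obtain ⟨p1, p2, p3⟩ := p
      obtain ⟨q1, q2, q3⟩ := q
      simp_all [Prod.ext_iff])
  have eYX : ent μ (fun ω => (Y ω, X ω)) = ent μ (fun ω => (X ω, Y ω)) :=
    ent_comp_inj μ (fun ω => (X ω, Y ω)) (f := Prod.swap) Prod.swap_injective
  -- main identity : H[U] = H[Y|X] + H[U|Y]
  have hm1 : ent μ X + ent μ U - ent μ (fun ω => (X ω, U ω)) = 0 := by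
    simpa only [mutInfo] using h1
  have hm2 : ent μ (fun ω => (X ω, Y ω)) + ent μ (fun ω => (U ω, Y ω))
      - ent μ (fun ω => (X ω, U ω, Y ω)) - ent μ Y = 0 := by
    simpa only [condMutInfo] using h2
  have hm3 : ent μ (fun ω => (Y ω, (X ω, U ω))) - ent μ (fun ω => (X ω, U ω)) = 0 := by
    simpa only [condEnt] using h3
  have hmain : ent μ U = condEnt μ Y X + condEnt μ U Y := by
    simp only [condEnt]
    linarith [eYXU, eXUY, eYX, hm1, hm2, hm3]
  -- the feasible dual variables
  set a : 𝒴 → ℝ := fun y => ent (μ[|Y ⁻¹' {y}]) U with hadef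
  have ha0 : ∀ y, 0 ≤ a y := fun y => ent_cond_nonneg μ (hY (measurableSet_singleton y)) U
  have hUY : condEnt μ U Y = ∑ y, (μ (Y ⁻¹' {y})).toReal * a y := condEnt_eq_sum μ hU hY
  -- pointwise consequence of h3
  have h3pt : ∀ (x : 𝒳) (u : 𝒰), μ (X ⁻¹' {x} ∩ U ⁻¹' {u}) ≠ 0 →
      ent (μ[|X ⁻¹' {x} ∩ U ⁻¹' {u}]) Y = 0 := by
    intro x u hne
    have hdec := condEnt_eq_sum μ hY hXU
    rw [h3] at hdec
    have hnn : ∀ p : 𝒳 × 𝒰, p ∈ Finset.univ →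
        0 ≤ (μ ((fun ω => (X ω, U ω)) ⁻¹' {p})).toReal
          * ent (μ[|(fun ω => (X ω, U ω)) ⁻¹' {p}]) Y := fun p _ =>
      mul_nonneg ENNReal.toReal_nonneg (ent_cond_nonneg μ (hXU (measurableSet_singleton p)) Y)
    have hz := (Finset.sum_eq_zero_iff_of_nonneg hnn).1 hdec.symm (x, u) (Finset.mem_univ _)
    rw [hpreXU x u] at hz
    have hmz : (μ (X ⁻¹' {x} ∩ U ⁻¹' {u})).toReal ≠ 0 :=
      ENNReal.toReal_ne_zero.2 ⟨hne, measure_ne_top μ _⟩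
    rcases mul_eq_zero.1 hz with h | h
    · exact absurd h hmz
    · exact h
  -- decomposition of the conditional mutual information
  have h2dec : condMutInfo μ X U Y
      = ∑ y, (μ (Y ⁻¹' {y})).toReal * mutInfo (μ[|Y ⁻¹' {y}]) X U := by
    have e1 := condEnt_eq_sum μ hX hY
    have e2 := condEnt_eq_sum μ hU hY
    have e3 := condEnt_eq_sum μ hXU hY
    have eassoc : ent μ (fun ω => ((X ω, U ω), Y ω)) = ent μ (fun ω => (X ω, U ω, Y ω)) :=
      ent_comp_inj μ (fun ω => (X ω, U ω, Y ω)) (f := fun p => ((p.1, p.2.1), p.2.2)) (by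
        intro p q h
        obtain ⟨p1, p2, p3⟩ := p
        obtain ⟨q1, q2, q3⟩ := q
        simp_all [Prod.ext_iff])
    have hsplit : condMutInfo μ X U Y =
        condEnt μ X Y + condEnt μ U Y - condEnt μ (fun ω => (X ω, U ω)) Y := by
      simp only [condMutInfo, condEnt]
      linarith [eassoc]
    rw [hsplit, e1, e2, e3, ← Finset.sum_add_distrib, ← Finset.sum_sub_distrib]
    refine Finset.sum_congr rfl fun y _ => ?_
    simp only [mutInfo]
    ring
  -- pointwise consequence of h2
  have h2pt : ∀ y : 𝒴, μ (Y ⁻¹' {y}) ≠ 0 → mutInfo (μ[|Y ⁻¹' {y}]) X U = 0 := by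
    intro y hy
    rw [h2] at h2dec
    have hnn : ∀ z : 𝒴, z ∈ Finset.univ →
        0 ≤ (μ (Y ⁻¹' {z})).toReal * mutInfo (μ[|Y ⁻¹' {z}]) X U := by
      intro z _
      rcases eq_or_ne (μ (Y ⁻¹' {z})) 0 with h | h
      · simp [h]
      · haveI : IsProbabilityMeasure (μ[|Y ⁻¹' {z}]) := cond_isProbabilityMeasure h
        exact mul_nonneg ENNReal.toReal_nonneg (mutInfo_key (μ[|Y ⁻¹' {z}]) hX hU).1
    have hz := (Finset.sum_eq_zero_iff_of_nonneg hnn).1 h2dec.symm y (Finset.mem_univ _)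
    have hmz : (μ (Y ⁻¹' {y})).toReal ≠ 0 :=
      ENNReal.toReal_ne_zero.2 ⟨hy, measure_ne_top μ _⟩
    rcases mul_eq_zero.1 hz with h | h
    · exact absurd h hmz
    · exact h
  -- consequence of h1
  have hfac1 := (mutInfo_key μ hX hU).2 h1
  have hUx : ∀ x : 𝒳, μ (X ⁻¹' {x}) ≠ 0 → ent (μ[|X ⁻¹' {x}]) U = ent μ U :=
    fun x hx => ent_cond_eq_of_factor μ hX hfac1 hx
  -- the feasibility constraints
  have hconstraint : ∀ x : 𝒳, 0 < μ (X ⁻¹' {x}) →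
      ∑ y : 𝒴, ((μ (Y ⁻¹' {y})).toReal - ((μ[|X ⁻¹' {x}]) (Y ⁻¹' {y})).toReal) * a y
        = ent (μ[|X ⁻¹' {x}]) Y - condEnt μ Y X := by
    intro x hx
    have hxne : μ (X ⁻¹' {x}) ≠ 0 := hx.ne'
    have hXx : MeasurableSet (X ⁻¹' {x}) := hX (measurableSet_singleton x)
    haveI hPν : IsProbabilityMeasure (μ[|X ⁻¹' {x}]) := cond_isProbabilityMeasure hxne
    set ν := μ[|X ⁻¹' {x}] with hν
    have c1 : condEnt ν Y U = 0 := by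
      rw [condEnt_eq_sum ν hY hU]
      refine Finset.sum_eq_zero fun u _ => ?_
      rcases eq_or_ne (ν (U ⁻¹' {u})) 0 with h | h
      · rw [h]; simp
      · have hc : ν[|U ⁻¹' {u}] = μ[|X ⁻¹' {x} ∩ U ⁻¹' {u}] := by
          rw [hν, cond_cond_eq_cond_inter hXx (hU (measurableSet_singleton u))]
        have hne2 : μ (X ⁻¹' {x} ∩ U ⁻¹' {u}) ≠ 0 := by
          intro h0
          apply h
          rw [hν, cond_apply hXx, h0, mul_zero]
        rw [hc, h3pt x u hne2, mul_zero]
    have c2 : condEnt ν U Y = ∑ y, (ν (Y ⁻¹' {y})).toReal * a y := by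
      rw [condEnt_eq_sum ν hU hY]
      refine Finset.sum_congr rfl fun y _ => ?_
      rcases eq_or_ne (ν (Y ⁻¹' {y})) 0 with h | h
      · rw [h]; simp
      · have hinterne : μ (X ⁻¹' {x} ∩ Y ⁻¹' {y}) ≠ 0 := by
          intro h0
          apply h
          rw [hν, cond_apply hXx, h0, mul_zero]
        have hyne : μ (Y ⁻¹' {y}) ≠ 0 := by
          intro h0
          exact hinterne (measure_inter_null_of_null_right _ h0)
        haveI : IsProbabilityMeasure (μ[|Y ⁻¹' {y}]) := cond_isProbabilityMeasure hyne
        have hYy : MeasurableSet (Y ⁻¹' {y}) := hY (measurableSet_singleton y)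
        have hc : ν[|Y ⁻¹' {y}] = (μ[|Y ⁻¹' {y}])[|X ⁻¹' {x}] := by
          rw [hν, cond_cond_eq_cond_inter hXx hYy, cond_cond_eq_cond_inter hYy hXx,
            Set.inter_comm]
        have hfac2 := (mutInfo_key (μ[|Y ⁻¹' {y}]) hX hU).2 (h2pt y hyne)
        have hXxne : (μ[|Y ⁻¹' {y}]) (X ⁻¹' {x}) ≠ 0 := by
          rw [cond_apply hYy]
          refine mul_ne_zero (ENNReal.inv_ne_zero.2 (measure_ne_top μ _)) ?_
          rw [Set.inter_comm]
          exact hinterne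
        have hent := ent_cond_eq_of_factor (μ[|Y ⁻¹' {y}]) hX hfac2 hXxne
        rw [hc, hent]
    have c3 : ent ν U = ent μ U := hUx x hxne
    have c4 := ent_sub_identity ν U Y
    have hsub : ∀ y ∈ Finset.univ, ((μ (Y ⁻¹' {y})).toReal - (ν (Y ⁻¹' {y})).toReal) * a y
        = (μ (Y ⁻¹' {y})).toReal * a y - (ν (Y ⁻¹' {y})).toReal * a y := fun y _ => by ring
    rw [Finset.sum_congr rfl hsub, Finset.sum_sub_distrib]
    linarith [hmain, hUY, c1, c2, c3, c4]
  -- assembling the result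
  have hmem : (∑ y, (μ (Y ⁻¹' {y})).toReal * a y) ∈ S := by
    rw [hS]
    exact ⟨a, ha0, hconstraint, rfl⟩
  have hnonneg : ∀ s ∈ S, 0 ≤ s := by
    intro s hs
    rw [hS] at hs
    obtain ⟨b, hb0, -, hb⟩ := hs
    rw [hb]
    exact Finset.sum_nonneg fun y _ => mul_nonneg ENNReal.toReal_nonneg (hb0 y)
  refine ⟨⟨_, hmem⟩, hnonneg, ?_⟩
  have hinf : sInf S ≤ ∑ y, (μ (Y ⁻¹' {y})).toReal * a y :=
    csInf_le ⟨0, fun s hs => hnonneg s hs⟩ hmem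
  rw [ge_iff_le]
  linarith [hmain, hUY, hinf]
end
end
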